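/- Let ω₁, ω₂ be positive integers with gcd(ω₁, ω₂) = g, and let x(t) be a two-frequency trigonometric polynomial with frequencies {mω₁ + nω₂ : |m|+|n| ≤ p}. Then x^φ is a trigonometric polynomial in the frequency g·ℤ whose maximal harmonic index (in units of g) is at most φ·p·max(ω₁, ω₂)/g; hence sampling x^φ at M equally spaced points over the period T = 2π/g with M > (φ+1)·p·max(ω₁, ω₂)/g recovers all harmonics of order up to p·max(ω₁, ω₂)/g without aliasing. -/

import Mathlib

/-!
Every frequency `m ω₁ + n ω₂` with `|m| + |n| ≤ p` equals `ℓ g` for an integer `ℓ` with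
`|ℓ| ≤ K := p max(ω₁, ω₂) / g`, so `x` lies in the span of the modes `e^{i k g t}`, `|k| ≤ K`.
Degrees add under multiplication, so `x ^ φ` has degree at most `N := φ p max(ω₁, ω₂) / g`.
At the samples `t_j = 2π j / (g M)` the mode `e^{i k g t}` becomes `ζ ^ (k j)` with `ζ = e^{2πi/M}`,
and `M > (φ + 1) p max(ω₁, ω₂) / g ≥ N + K` means that no mode of `x ^ φ` aliases onto a mode of
order at most `K`. Orthogonality of the powers of `ζ` then recovers those coefficients exactly from
the discrete Fourier transform; their real and imaginary parts are the cosine and sine coefficients.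
-/

open Real Finset

theorem Finset.sum_Icc_neg_eq_add_sum_Icc_one {G : Type*} [AddCommGroup G] (F : ℤ → G)
    (N : ℕ) :
    ∑ k ∈ Icc (-(N : ℤ)) N, F k = F 0 + ∑ k ∈ Icc 1 N, (F k + F (-(k : ℤ))) := by
  induction N with
  | zero => simp
  | succ N ih =>
    rw [Nat.cast_succ, sum_Icc_succ_eq_add_endpoints, ih, sum_Icc_succ_top (by omega)]
    push_cast
    abel

theorem sum_Icc_one_pow_eq_zero {R : Type*} [Ring R] [NoZeroDivisors R] {z : R} {M : ℕ}
    (hzM : z ^ M = 1) (hz : z ≠ 1) : ∑ j ∈ Icc 1 M, z ^ j = 0 := by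
  have hgeom : ∑ j ∈ range M, z ^ j = 0 := by
    have := geom_sum_mul z M
    rw [hzM, sub_self] at this
    exact (mul_eq_zero.1 this).resolve_right (sub_ne_zero.2 hz)
  rw [← Ico_add_one_right_eq_Icc, sum_Ico_eq_sum_range, add_tsub_cancel_right]
  simp [pow_add, ← mul_sum, hgeom]

namespace IsPrimitiveRoot

variable {K : Type*} [Field K] {ζ : K} {M : ℕ}

theorem sum_Icc_one_zpow_pow (hζ : IsPrimitiveRoot ζ M) {n : ℤ} (hn : n.natAbs < M) :
    ∑ j ∈ Icc 1 M, (ζ ^ n) ^ j = if n = 0 then (M : K) else 0 := by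
  split_ifs with h0
  · simp [h0]
  · refine sum_Icc_one_pow_eq_zero ?_ fun h => h0 ?_
    · rw [← zpow_natCast, ← zpow_mul, mul_comm, zpow_mul, zpow_natCast, hζ.pow_eq_one,
        one_zpow]
    · exact Int.eq_zero_of_dvd_of_natAbs_lt_natAbs ((hζ.zpow_eq_one_iff_dvd n).1 h) hn

/-- No aliasing: for `k ∈ [-N, N]`, `M` divides `k - k'` only if `k = k'`, as `|k - k'| < M`. -/
theorem sum_Icc_one_mul_zpow_neg (hζ : IsPrimitiveRoot ζ M) {N : ℕ} {e : ℤ → K}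
    (he : ∀ k ∉ Icc (-(N : ℤ)) N, e k = 0) {k' : ℤ} (hM : N + k'.natAbs < M) :
    ∑ j ∈ Icc 1 M, (∑ k ∈ Icc (-(N : ℤ)) N, e k * (ζ ^ k) ^ j) * (ζ ^ (-k')) ^ j =
      M * e k' := by
  have hζ0 : ζ ≠ 0 := hζ.ne_zero (by omega)
  have hterm : ∀ k ∈ Icc (-(N : ℤ)) N,
      ∑ j ∈ Icc 1 M, e k * (ζ ^ k) ^ j * (ζ ^ (-k')) ^ j =
        if k = k' then M * e k' else 0 := by
    intro k hk
    simp only [mul_assoc, ← mul_pow, ← zpow_add₀ hζ0, ← mul_sum, ← sub_eq_add_neg]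
    rw [hζ.sum_Icc_one_zpow_pow (by rw [mem_Icc] at hk; omega)]
    by_cases h : k = k'
    · simp [h, mul_comm]
    · simp [h, sub_eq_zero]
  simp_rw [sum_mul]
  rw [sum_comm, sum_congr rfl hterm, sum_ite_eq']
  split_ifs with hk'
  · rfl
  · rw [he k' hk', mul_zero]

end IsPrimitiveRoot

noncomputable def expMode (ω : ℝ) (k : ℤ) (t : ℝ) : ℂ :=
  Complex.exp ((k * ω * t : ℝ) * Complex.I)

theorem expMode_zero (ω : ℝ) : expMode ω 0 = 1 := by
  funext t
  simp [expMode]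

theorem expMode_add (ω : ℝ) (k l : ℤ) : expMode ω (k + l) = expMode ω k * expMode ω l := by
  funext t
  simp only [expMode, Pi.mul_apply, ← Complex.exp_add]
  push_cast
  ring_nf

theorem expMode_apply (ω : ℝ) (k : ℤ) (t : ℝ) :
    expMode ω k t = cos (k * ω * t) + sin (k * ω * t) * Complex.I := by
  rw [expMode, Complex.exp_mul_I, Complex.ofReal_cos, Complex.ofReal_sin]

theorem expMode_neg_apply (ω : ℝ) (k : ℤ) (t : ℝ) :
    expMode ω (-k) t = cos (k * ω * t) - sin (k * ω * t) * Complex.I := by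
  rw [expMode_apply, Int.cast_neg, neg_mul, neg_mul, cos_neg, sin_neg, Complex.ofReal_neg,
    neg_mul, sub_eq_add_neg]

theorem re_mul_expMode (w : ℂ) (ω : ℝ) (k : ℤ) (t : ℝ) :
    (w * expMode ω k t).re = w.re * cos (k * ω * t) - w.im * sin (k * ω * t) := by
  rw [expMode, Complex.mul_re, Complex.exp_ofReal_mul_I_re, Complex.exp_ofReal_mul_I_im]

noncomputable def trigPoly (ω : ℝ) (N : ℕ) : Submodule ℂ (ℝ → ℂ) :=
  Submodule.span ℂ (expMode ω '' Set.Icc (-(N : ℤ)) N)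

section trigPoly

variable {ω : ℝ} {N : ℕ}

theorem expMode_mem_trigPoly {k : ℤ} (hk : k.natAbs ≤ N) : expMode ω k ∈ trigPoly ω N :=
  Submodule.subset_span ⟨k, ⟨by omega, by omega⟩, rfl⟩

theorem trigPoly_mono {N' : ℕ} (h : N ≤ N') : trigPoly ω N ≤ trigPoly ω N' :=
  Submodule.span_mono (Set.image_mono (Set.Icc_subset_Icc (by omega) (by omega)))

theorem trigPoly_mul_le (N₁ N₂ : ℕ) :
    trigPoly ω N₁ * trigPoly ω N₂ ≤ trigPoly ω (N₁ + N₂) := by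
  rw [trigPoly, trigPoly, Submodule.span_mul_span, Submodule.span_le]
  rintro _ ⟨_, ⟨k₁, hk₁, rfl⟩, _, ⟨k₂, hk₂, rfl⟩, rfl⟩
  show expMode ω k₁ * expMode ω k₂ ∈ _
  rw [← expMode_add]
  exact expMode_mem_trigPoly (by simp only [Set.mem_Icc] at hk₁ hk₂; omega)

theorem trigPoly_pow_le (n : ℕ) : trigPoly ω N ^ n ≤ trigPoly ω (n * N) := by
  induction n with
  | zero =>
    rw [pow_zero, zero_mul, Submodule.one_eq_span, Submodule.span_le, Set.singleton_subset_iff,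
      ← expMode_zero ω]
    exact expMode_mem_trigPoly le_rfl
  | succ n ih =>
    calc trigPoly ω N ^ (n + 1) = trigPoly ω N ^ n * trigPoly ω N := pow_succ _ _
      _ ≤ trigPoly ω (n * N) * trigPoly ω N := mul_le_mul' ih le_rfl
      _ ≤ trigPoly ω ((n + 1) * N) := by rw [add_one_mul]; exact trigPoly_mul_le _ _

theorem ofReal_cos_add_sin_mem_trigPoly {ℓ : ℤ} (hℓ : ℓ.natAbs ≤ N) (a b : ℝ) :
    (fun t => ((a * cos (ℓ * ω * t) + b * sin (ℓ * ω * t) : ℝ) : ℂ)) ∈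
      trigPoly ω N := by
  have h : (fun t => ((a * cos (ℓ * ω * t) + b * sin (ℓ * ω * t) : ℝ) : ℂ)) =
      ((a - b * Complex.I) / 2) • expMode ω ℓ +
        ((a + b * Complex.I) / 2) • expMode ω (-ℓ) := by
    funext t
    simp only [Pi.add_apply, Pi.smul_apply, smul_eq_mul, Complex.ofReal_add, Complex.ofReal_mul]
    rw [expMode_apply, expMode_neg_apply]
    linear_combination (b * sin (ℓ * ω * t) : ℂ) * Complex.I_sq
  rw [h]
  exact add_mem (Submodule.smul_mem _ _ (expMode_mem_trigPoly hℓ))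
    (Submodule.smul_mem _ _ (expMode_mem_trigPoly (by simpa using hℓ)))

theorem exists_coeff_of_mem_trigPoly {f : ℝ → ℂ} (hf : f ∈ trigPoly ω N) :
    ∃ e : ℤ → ℂ, (∀ k ∉ Icc (-(N : ℤ)) N, e k = 0) ∧
      f = ∑ k ∈ Icc (-(N : ℤ)) N, e k • expMode ω k := by
  rw [trigPoly, ← coe_Icc, Finsupp.mem_span_image_iff_linearCombination] at hf
  obtain ⟨l, hl, rfl⟩ := hf
  refine ⟨l, fun k hk => Finsupp.notMem_support_iff.1 fun h => hk (hl h), ?_⟩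
  exact Finsupp.sum_of_support_subset l hl _ fun _ _ => zero_smul ℂ _

end trigPoly

theorem exists_eq_mul_gcd_natAbs_le (ω₁ ω₂ : ℕ) (m n : ℤ) :
    ∃ ℓ : ℤ, m * ω₁ + n * ω₂ = ℓ * Nat.gcd ω₁ ω₂ ∧
      ℓ.natAbs ≤ (m.natAbs + n.natAbs) * max ω₁ ω₂ / Nat.gcd ω₁ ω₂ := by
  set g := Nat.gcd ω₁ ω₂
  have hdvd : (g : ℤ) ∣ m * ω₁ + n * ω₂ :=
    dvd_add (Dvd.dvd.mul_left (Int.natCast_dvd_natCast.2 (Nat.gcd_dvd_left ω₁ ω₂)) m)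
      (Dvd.dvd.mul_left (Int.natCast_dvd_natCast.2 (Nat.gcd_dvd_right ω₁ ω₂)) n)
  obtain ⟨ℓ, hℓ⟩ := hdvd
  rcases Nat.eq_zero_or_pos g with hg | hg
  · exact ⟨0, by rw [hℓ, hg]; simp, by simp⟩
  refine ⟨ℓ, by rw [hℓ, mul_comm], (Nat.le_div_iff_mul_le hg).2 ?_⟩
  calc ℓ.natAbs * g = (m * ω₁ + n * ω₂).natAbs := by
        rw [hℓ, Int.natAbs_mul, mul_comm, Int.natAbs_natCast]
    _ ≤ m.natAbs * ω₁ + n.natAbs * ω₂ := by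
      simpa [Int.natAbs_mul] using Int.natAbs_add_le (m * ω₁) (n * ω₂)
    _ ≤ (m.natAbs + n.natAbs) * max ω₁ ω₂ := by
      rw [add_mul]; gcongr <;> simp

theorem ofReal_sum_cos_add_sin_mem_trigPoly_gcd (ω₁ ω₂ p : ℕ) (s : Finset (ℤ × ℤ))
    (hs : ∀ mn ∈ s, mn.1.natAbs + mn.2.natAbs ≤ p) (a b : ℤ × ℤ → ℝ) :
    (fun t => ((∑ mn ∈ s, (a mn * cos ((mn.1 * ω₁ + mn.2 * ω₂) * t) +
        b mn * sin ((mn.1 * ω₁ + mn.2 * ω₂) * t)) : ℝ) : ℂ)) ∈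
      trigPoly (Nat.gcd ω₁ ω₂) (p * max ω₁ ω₂ / Nat.gcd ω₁ ω₂) := by
  have hsum : (fun t => ((∑ mn ∈ s, (a mn * cos ((mn.1 * ω₁ + mn.2 * ω₂) * t) +
        b mn * sin ((mn.1 * ω₁ + mn.2 * ω₂) * t)) : ℝ) : ℂ)) =
      ∑ mn ∈ s, fun t => ((a mn * cos ((mn.1 * ω₁ + mn.2 * ω₂) * t) +
        b mn * sin ((mn.1 * ω₁ + mn.2 * ω₂) * t) : ℝ) : ℂ) := by
    funext t
    simp only [Complex.ofReal_sum, Finset.sum_apply]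
  rw [hsum]
  refine Submodule.sum_mem _ fun mn hmn => ?_
  obtain ⟨ℓ, hℓ, hℓN⟩ := exists_eq_mul_gcd_natAbs_le ω₁ ω₂ mn.1 mn.2
  have hfreq : (mn.1 * ω₁ + mn.2 * ω₂ : ℝ) = ℓ * (Nat.gcd ω₁ ω₂ : ℕ) := by
    exact_mod_cast hℓ
  simp only [hfreq]
  exact ofReal_cos_add_sin_mem_trigPoly
    (hℓN.trans (Nat.div_le_div_right (Nat.mul_le_mul_right _ (hs mn hmn)))) _ _

noncomputable def cosCoeff (e : ℤ → ℂ) (k : ℕ) : ℝ :=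
  if k = 0 then (e 0).re else (e k + e (-k)).re

noncomputable def sinCoeff (e : ℤ → ℂ) (k : ℕ) : ℝ :=
  (e (-k) - e k).im

theorem re_sum_smul_expMode (ω : ℝ) (N : ℕ) (e : ℤ → ℂ) (t : ℝ) :
    ((∑ k ∈ Icc (-(N : ℤ)) N, e k • expMode ω k) t).re = cosCoeff e 0 +
      ∑ k ∈ Icc 1 N, (cosCoeff e k * cos (k * ω * t) + sinCoeff e k * sin (k * ω * t)) := by
  simp only [Finset.sum_apply, Pi.smul_apply, smul_eq_mul, Complex.re_sum]
  rw [sum_Icc_neg_eq_add_sum_Icc_one (fun k => (e k * expMode ω k t).re)]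
  congr 1
  · rw [re_mul_expMode]
    simp [cosCoeff]
  · refine sum_congr rfl fun k hk => ?_
    have hk0 : k ≠ 0 := by rw [mem_Icc] at hk; omega
    simp only [re_mul_expMode, cosCoeff, sinCoeff, if_neg hk0, Int.cast_neg, Int.cast_natCast,
      neg_mul, cos_neg, sin_neg, Complex.add_re, Complex.sub_im]
    ring

theorem cexp_two_pi_I_div_zpow_pow (M : ℕ) (k : ℤ) (j : ℕ) :
    (Complex.exp (2 * π * Complex.I / M) ^ k) ^ j =
      Complex.exp ((k * (2 * π * j / M) : ℝ) * Complex.I) := by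
  rw [← Complex.exp_int_mul, ← Complex.exp_nat_mul]
  congr 1
  push_cast
  ring

theorem expMode_sample {ω : ℝ} (hω : ω ≠ 0) (M : ℕ) (k : ℤ) (j : ℕ) :
    expMode ω k (2 * π * j / (ω * M)) = (Complex.exp (2 * π * Complex.I / M) ^ k) ^ j := by
  rw [cexp_two_pi_I_div_zpow_pow, expMode, mul_assoc, mul_div_assoc', mul_div_mul_left _ _ hω]

theorem sum_ofReal_mul_cexp_mul_I {ι : Type*} (s : Finset ι) (y θ : ι → ℝ) :
    ∑ j ∈ s, (y j : ℂ) * Complex.exp (θ j * Complex.I) =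
      ((∑ j ∈ s, y j * cos (θ j) : ℝ) : ℂ) +
        ((∑ j ∈ s, y j * sin (θ j) : ℝ) : ℂ) * Complex.I := by
  simp only [Complex.exp_mul_I, ← Complex.ofReal_cos, ← Complex.ofReal_sin, Complex.ofReal_sum,
    Complex.ofReal_mul, sum_mul, ← sum_add_distrib, mul_add, mul_assoc]

section Sampling

variable {ω : ℝ} {N M : ℕ} {e : ℤ → ℂ} {f : ℝ → ℝ}

theorem natCast_mul_coeff_eq_sum_sample (hω : ω ≠ 0)
    (he : ∀ k ∉ Icc (-(N : ℤ)) N, e k = 0)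
    (hf : (fun t => (f t : ℂ)) = ∑ k ∈ Icc (-(N : ℤ)) N, e k • expMode ω k) {k' : ℤ}
    (hM : N + k'.natAbs < M) :
    M * e k' =
      ((∑ j ∈ Icc 1 M, f (2 * π * j / (ω * M)) * cos (k' * (2 * π * j / M)) : ℝ) : ℂ) -
        ((∑ j ∈ Icc 1 M, f (2 * π * j / (ω * M)) * sin (k' * (2 * π * j / M)) : ℝ) : ℂ) *
          Complex.I := by
  calc (M : ℂ) * e k'
      _ = ∑ j ∈ Icc 1 M, (f (2 * π * j / (ω * M)) : ℂ) *
          Complex.exp ((-k' * (2 * π * j / M) : ℝ) * Complex.I) := by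
        rw [← (Complex.isPrimitiveRoot_exp M (by omega)).sum_Icc_one_mul_zpow_neg he hM]
        refine sum_congr rfl fun j _ => ?_
        simp only [congrFun hf, Finset.sum_apply, Pi.smul_apply, smul_eq_mul,
          expMode_sample hω, cexp_two_pi_I_div_zpow_pow, Int.cast_neg]
      _ = _ := by
        rw [sum_ofReal_mul_cexp_mul_I]
        simp only [neg_mul, cos_neg, sin_neg, mul_neg, sum_neg_distrib, Complex.ofReal_neg]
        ring

theorem cosCoeff_zero_eq_mean_sample (hω : ω ≠ 0) (he : ∀ k ∉ Icc (-(N : ℤ)) N, e k = 0)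
    (hf : (fun t => (f t : ℂ)) = ∑ k ∈ Icc (-(N : ℤ)) N, e k • expMode ω k)
    (hM : N < M) :
    cosCoeff e 0 = 1 / M * ∑ j ∈ Icc 1 M, f (2 * π * j / (ω * M)) := by
  have hM0 : (M : ℂ) ≠ 0 := by exact_mod_cast (by omega : M ≠ 0)
  have h0 := natCast_mul_coeff_eq_sum_sample hω he hf (k' := 0) (by simpa using hM)
  simp only [Int.cast_zero, zero_mul, cos_zero, sin_zero, mul_one, mul_zero, sum_const_zero,
    Complex.ofReal_zero, zero_mul, sub_zero] at h0
  have he0 : e 0 = ((1 / M * ∑ j ∈ Icc 1 M, f (2 * π * j / (ω * M)) : ℝ) : ℂ) := by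
    rw [Complex.ofReal_mul, ← h0]
    push_cast
    field_simp
  rw [cosCoeff, if_pos rfl, he0, Complex.ofReal_re]

theorem cosCoeff_sinCoeff_eq_dft (hω : ω ≠ 0) (he : ∀ k ∉ Icc (-(N : ℤ)) N, e k = 0)
    (hf : (fun t => (f t : ℂ)) = ∑ k ∈ Icc (-(N : ℤ)) N, e k • expMode ω k) {k : ℕ}
    (hk : k ≠ 0) (hM : N + k < M) :
    cosCoeff e k =
        2 / M * ∑ j ∈ Icc 1 M, f (2 * π * j / (ω * M)) * cos (k * (2 * π * j / M)) ∧
      sinCoeff e k =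
        2 / M * ∑ j ∈ Icc 1 M, f (2 * π * j / (ω * M)) * sin (k * (2 * π * j / M)) := by
  have hM0 : (M : ℂ) ≠ 0 := by exact_mod_cast (by omega : M ≠ 0)
  have hplus := natCast_mul_coeff_eq_sum_sample hω he hf (k' := k) (by simpa using hM)
  have hminus := natCast_mul_coeff_eq_sum_sample hω he hf (k' := -k) (by simpa using hM)
  simp only [Int.cast_neg, Int.cast_natCast, neg_mul, cos_neg, sin_neg, sum_neg_distrib,
    mul_neg, Complex.ofReal_neg] at hplus hminus
  set C := ∑ j ∈ Icc 1 M, f (2 * π * j / (ω * M)) * cos (k * (2 * π * j / M))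
  set S := ∑ j ∈ Icc 1 M, f (2 * π * j / (ω * M)) * sin (k * (2 * π * j / M))
  have hcos : e k + e (-k) = ((2 / M * C : ℝ) : ℂ) := by
    rw [Complex.ofReal_mul]
    push_cast
    field_simp
    linear_combination hplus + hminus
  have hsin : e (-k) - e k = ((2 / M * S : ℝ) : ℂ) * Complex.I := by
    rw [Complex.ofReal_mul]
    push_cast
    field_simp
    linear_combination hminus - hplus
  rw [cosCoeff, if_neg hk, hcos, Complex.ofReal_re, sinCoeff, hsin, Complex.mul_I_im,
    Complex.ofReal_re]
  exact ⟨rfl, rfl⟩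

end Sampling

theorem RMHB_conditional_equivalence_general (ω₁ ω₂ : ℕ) (hω₁ : 0 < ω₁)
    (g : ℕ) (hg : g = Nat.gcd ω₁ ω₂)
    (p φ : ℕ)
    (a b : ℤ × ℤ → ℝ) (x : ℝ → ℝ)
    (hx : ∀ t, x t =
      ∑ mn ∈ (Finset.Icc ((-(p : ℤ), -(p : ℤ))) (((p : ℤ), (p : ℤ)))).filter
          (fun mn => mn.1.natAbs + mn.2.natAbs ≤ p),
        (a mn * Real.cos (((mn.1 : ℝ) * (ω₁ : ℝ) + (mn.2 : ℝ) * (ω₂ : ℝ)) * t) +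
         b mn * Real.sin (((mn.1 : ℝ) * (ω₁ : ℝ) + (mn.2 : ℝ) * (ω₂ : ℝ)) * t))) :
    ∃ c d : ℕ → ℝ,
      (∀ t, (x t) ^ φ = c 0 + ∑ k ∈ Finset.Icc 1 (φ * p * max ω₁ ω₂ / g),
          (c k * Real.cos ((k : ℝ) * (g : ℝ) * t) + d k * Real.sin ((k : ℝ) * (g : ℝ) * t))) ∧
      ∀ M : ℕ, M > (φ + 1) * p * max ω₁ ω₂ / g →
        (c 0 = (1 / (M : ℝ)) * ∑ j ∈ Finset.Icc 1 M,
            (x (2 * π * j / ((g : ℝ) * M))) ^ φ) ∧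
        ∀ k, 1 ≤ k → k ≤ p * max ω₁ ω₂ / g →
          c k = (2 / (M : ℝ)) * ∑ j ∈ Finset.Icc 1 M,
              (x (2 * π * j / ((g : ℝ) * M))) ^ φ * Real.cos ((k : ℝ) * (2 * π * j / M)) ∧
          d k = (2 / (M : ℝ)) * ∑ j ∈ Finset.Icc 1 M,
              (x (2 * π * j / ((g : ℝ) * M))) ^ φ * Real.sin ((k : ℝ) * (2 * π * j / M)) := by
  have hg0 : (g : ℝ) ≠ 0 := by
    rw [hg]
    exact_mod_cast (Nat.gcd_pos_of_pos_left ω₂ hω₁).ne'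
  have hxg : (fun t => (x t : ℂ)) ∈ trigPoly g (p * max ω₁ ω₂ / g) := by
    simp_rw [hx, hg]
    exact ofReal_sum_cos_add_sin_mem_trigPoly_gcd ω₁ ω₂ p _
      (fun mn hmn => (mem_filter.1 hmn).2) a b
  have hpow :
      (fun t => ((x t ^ φ : ℝ) : ℂ)) ∈ trigPoly g (φ * p * max ω₁ ω₂ / g) := by
    simp_rw [Complex.ofReal_pow]
    refine trigPoly_mono ?_ (trigPoly_pow_le φ (Submodule.pow_mem_pow _ hxg φ))
    rw [mul_assoc]
    exact Nat.mul_div_le_mul_div_assoc _ _ _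
  obtain ⟨e, he, hfe⟩ := exists_coeff_of_mem_trigPoly hpow
  refine ⟨cosCoeff e, sinCoeff e, fun t => ?_, fun M hM => ?_⟩
  · rw [← re_sum_smul_expMode, ← hfe, Complex.ofReal_re]
  · have hbound : φ * p * max ω₁ ω₂ / g + p * max ω₁ ω₂ / g < M := by
      refine lt_of_le_of_lt Nat.div_add_div_le_add_div (lt_of_eq_of_lt ?_ hM)
      rw [add_one_mul, add_mul]
    exact ⟨cosCoeff_zero_eq_mean_sample hg0 he hfe ((Nat.le_add_right _ _).trans_lt hbound),
      fun k hk1 hkK => cosCoeff_sinCoeff_eq_dft hg0 he hfe (by omega)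
        ((Nat.add_le_add_left hkK _).trans_lt hbound)⟩

theorem RMHB_conditional_equivalence (ω₁ ω₂ : ℕ) (hω₁ : 0 < ω₁) (hω₂ : 0 < ω₂)
    (g : ℕ) (hg : g = Nat.gcd ω₁ ω₂)
    (p φ : ℕ) (hφ : 1 ≤ φ)
    (a b : ℤ × ℤ → ℝ) (x : ℝ → ℝ)
    (hx : ∀ t, x t =
      ∑ mn ∈ (Finset.Icc ((-(p : ℤ), -(p : ℤ))) (((p : ℤ), (p : ℤ)))).filter
          (fun mn => mn.1.natAbs + mn.2.natAbs ≤ p),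
        (a mn * Real.cos (((mn.1 : ℝ) * (ω₁ : ℝ) + (mn.2 : ℝ) * (ω₂ : ℝ)) * t) +
         b mn * Real.sin (((mn.1 : ℝ) * (ω₁ : ℝ) + (mn.2 : ℝ) * (ω₂ : ℝ)) * t))) :
    ∃ c d : ℕ → ℝ,
      (∀ t, (x t) ^ φ = c 0 + ∑ k ∈ Finset.Icc 1 (φ * p * max ω₁ ω₂ / g),
          (c k * Real.cos ((k : ℝ) * (g : ℝ) * t) + d k * Real.sin ((k : ℝ) * (g : ℝ) * t))) ∧
      ∀ M : ℕ, M > (φ + 1) * p * max ω₁ ω₂ / g →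
        (c 0 = (1 / (M : ℝ)) * ∑ j ∈ Finset.Icc 1 M,
            (x (2 * π * j / ((g : ℝ) * M))) ^ φ) ∧
        ∀ k, 1 ≤ k → k ≤ p * max ω₁ ω₂ / g →
          c k = (2 / (M : ℝ)) * ∑ j ∈ Finset.Icc 1 M,
              (x (2 * π * j / ((g : ℝ) * M))) ^ φ * Real.cos ((k : ℝ) * (2 * π * j / M)) ∧
          d k = (2 / (M : ℝ)) * ∑ j ∈ Finset.Icc 1 M,
              (x (2 * π * j / ((g : ℝ) * M))) ^ φ * Real.sin ((k : ℝ) * (2 * π * j / M)) :=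
  RMHB_conditional_equivalence_general ω₁ ω₂ hω₁ g hg p φ a b x hx
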